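/- arXiv:1312.1094 — 2 statements merged into one kernel-verified Lean document; each statement's English description precedes it below -/
import Mathlib

section
/- For every integer b ≥ 2 and every bijection φ : ℕ → ℕ, the digit-permutation map T^b_φ is a bijection of [0,1) onto itself and preserves Lebesgue measure: the pushforward of λ restricted to [0,1) under T^b_φ equals λ restricted to [0,1). -/
open MeasureTheory

/-- The real number in `[0,1]` represented by a base-`b` digit sequence `a`,
namely `∑_{k ≥ 0} a(k) · b^{-(k+1)}`. -/
noncomputable def baseVal (b : ℕ) (a : ℕ → ℕ) : ℝ :=
  ∑' k : ℕ, (a k : ℝ) / (b : ℝ) ^ (k + 1)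

/-- The `k`-th digit of the canonical base-`b` expansion of `x ∈ [0,1)`, i.e. of the unique
representing base-`b` digit sequence that is not eventually `b - 1`; it is given by the
standard formula `⌊x · b^(k+1)⌋ mod b`. -/
noncomputable def canonDigit (b : ℕ) (x : ℝ) (k : ℕ) : ℕ :=
  (⌊x * (b : ℝ) ^ (k + 1)⌋ % (b : ℤ)).toNat

/-- The digit-permutation map `T^b_φ : [0,1) → [0,1)` associated to a bijection `φ : ℕ → ℕ`:
it sends `x` with canonical base-`b` expansion `a` to the real number represented by the
digit sequence `k ↦ a(φ⁻¹(k))`. -/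
noncomputable def digitPerm (b : ℕ) (φ : ℕ ≃ ℕ) (x : ℝ) : ℝ :=
  baseVal b (fun k => canonDigit b x (φ.symm k))

/-!
Write `digits : [0,1) → (ℕ → Fin b)` for the canonical expansion and `ofDigits` for its
left inverse, so that `T_φ = ofDigits ∘ (· ∘ φ⁻¹) ∘ digits`. Splitting off the first digit,
`x = (d + y) / b`, shows by induction that every cylinder `{x | digits x i ∈ tᵢ for i < N}`
has Lebesgue measure `∏ |tᵢ| / b`; hence `digits` carries Lebesgue measure on `[0,1)` to the
product of uniform measures on `Fin b`, and `ofDigits` carries it back. Permuting coordinates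
preserves a product measure, so `T_φ` preserves Lebesgue measure.

For bijectivity: the canonical expansions are exactly the digit sequences that are not
eventually `b - 1`, a property invariant under permuting positions; so `T_φ` maps `[0,1)` to
itself and `T_{φ⁻¹}` is its inverse.
-/

open Filter Set
open scoped ENNReal

namespace Real

variable {b : ℕ}

lemma ofDigits_eq_add_div (a : ℕ → Fin b) :
    ofDigits a = (a 0 + ofDigits fun i => a (i + 1)) / b := by
  rw [ofDigits_eq_sum_add_ofDigits a 1]
  simp [ofDigitsTerm]
  ring

lemma ofDigits_lt_one (hb : 1 < b) {a : ℕ → Fin b} (ha : ∃ i, (a i : ℕ) ≠ b - 1) :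
    ofDigits a < 1 := by
  obtain ⟨i, hi⟩ := ha
  rw [← ofDigits_const_last_eq_one' hb]
  refine Summable.tsum_lt_tsum (i := i) (fun j => ?_) ?_ summable_ofDigitsTerm
    summable_ofDigitsTerm
  · unfold ofDigitsTerm
    gcongr
    exact Nat.le_sub_one_of_lt (a j).isLt
  · unfold ofDigitsTerm
    gcongr
    exact lt_of_le_of_ne (Nat.le_sub_one_of_lt (a i).isLt) hi

variable [NeZero b]

lemma measurable_digits : Measurable fun x : ℝ => digits x b :=
  measurable_pi_lambda _ fun _ =>
    measurable_from_nat.comp (Nat.measurable_floor.comp (measurable_id.mul_const _))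

lemma digits_add_div_pow {y : ℝ} (hy : 0 ≤ y) (m n i : ℕ) :
    digits ((m + y) / b ^ n) b (i + n) = digits y b i := by
  have hb : (b : ℝ) ≠ 0 := NeZero.ne _
  have key : (m + y) / b ^ n * b ^ (i + n + 1) = y * b ^ (i + 1) + (m * b ^ i * b : ℕ) := by
    push_cast; field_simp; ring
  ext
  rw [digits, digits, Fin.val_ofNat, Fin.val_ofNat, key,
    Nat.floor_add_natCast (by positivity), Nat.add_mul_mod_self_right]

lemma digits_add_div_zero {y : ℝ} (hy : y ∈ Ico 0 1) (d : Fin b) :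
    digits ((d + y) / b) b 0 = d := by
  have hb : (b : ℝ) ≠ 0 := NeZero.ne _
  ext
  rw [digits, Fin.val_ofNat, zero_add, pow_one, div_mul_cancel₀ _ hb, add_comm,
    Nat.floor_add_natCast hy.1, Nat.floor_eq_zero.2 hy.2, zero_add, Nat.mod_eq_of_lt d.isLt]

lemma digits_ofDigits (hb : 1 < b) {a : ℕ → Fin b}
    (ha : ∃ᶠ i in atTop, (a i : ℕ) ≠ b - 1) :
    digits (ofDigits a) b = a := by
  have hshift (a : ℕ → Fin b) (ha : ∃ᶠ i in atTop, (a i : ℕ) ≠ b - 1) :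
      ∃ᶠ i in atTop, (a (i + 1) : ℕ) ≠ b - 1 := by
    rwa [← map_add_atTop_eq_nat 1, frequently_map] at ha
  funext i
  induction i generalizing a with
  | zero =>
    rw [ofDigits_eq_add_div]
    exact digits_add_div_zero ⟨ofDigits_nonneg _, ofDigits_lt_one hb (hshift a ha).exists⟩ _
  | succ i ih =>
    rw [ofDigits_eq_add_div, ← pow_one (b : ℝ), digits_add_div_pow (ofDigits_nonneg _)]
    exact ih (hshift a ha)

lemma frequently_digits_ne (hb : 1 < b) {x : ℝ} (hx : x ∈ Ico 0 1) :
    ∃ᶠ i in atTop, (digits x b i : ℕ) ≠ b - 1 := by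
  -- Otherwise the fractional part `y` of `b ^ n * x` would have all digits `b - 1`, so `y = 1`.
  intro h
  obtain ⟨n, hn⟩ := eventually_atTop.1 h
  have hb0 : (b : ℝ) ≠ 0 := NeZero.ne _
  set m := ⌊x * b ^ n⌋₊
  set y := x * b ^ n - m
  have hy : y ∈ Ico 0 1 :=
    ⟨sub_nonneg.2 (Nat.floor_le (by have := hx.1; positivity)),
      by linarith [Nat.lt_floor_add_one (x * b ^ n)]⟩
  have hxy : x = (m + y) / b ^ n := by simp only [y]; field_simp; ring
  have hdigits : digits y b = fun _ => ⟨b - 1, Nat.sub_one_lt_of_lt hb⟩ := funext fun i => by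
    rw [← digits_add_div_pow hy.1 m n i, ← hxy]
    exact Fin.ext (not_not.1 (hn (i + n) (by omega)))
  have := ofDigits_digits hb hy
  rw [hdigits, ofDigits_const_last_eq_one' hb] at this
  exact hy.2.ne' this

lemma mul_sub_digits_zero_mem_Ico {x : ℝ} (hx : x ∈ Ico 0 1) :
    b * x - (digits x b 0 : ℕ) ∈ Ico 0 1 := by
  have hb : (0 : ℝ) < b := Nat.cast_pos.2 (NeZero.pos b)
  have hx0 : 0 ≤ x * b := by have := hx.1; positivity
  have hfloor : ⌊x * b⌋₊ < b := (Nat.floor_lt hx0).2 (by nlinarith [hx.2])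
  have hd : (digits x b 0 : ℕ) = ⌊x * b⌋₊ := by
    rw [digits, Fin.val_ofNat, zero_add, pow_one, Nat.mod_eq_of_lt hfloor]
  rw [hd, mul_comm]
  exact ⟨sub_nonneg.2 (Nat.floor_le hx0), by linarith [Nat.lt_floor_add_one (x * b)]⟩

lemma digits_of_mul_sub_mem_Ico {x : ℝ} {d : Fin b} (h : b * x - (d : ℕ) ∈ Ico 0 1) :
    digits x b 0 = d ∧ ∀ i, digits x b (i + 1) = digits (b * x - (d : ℕ)) b i := by
  have hb : (b : ℝ) ≠ 0 := NeZero.ne _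
  obtain ⟨y, rfl⟩ : ∃ y, x = (d + y) / b := ⟨b * x - (d : ℕ), by field_simp; ring⟩
  have hy : (b : ℝ) * ((d + y) / b) - (d : ℕ) = y := by field_simp; ring
  rw [hy] at h ⊢
  exact ⟨digits_add_div_zero h d, fun i => by
    simpa using digits_add_div_pow (b := b) h.1 d 1 i⟩

lemma setOf_digits_mem_range_succ (N : ℕ) (t : ℕ → Set (Fin b)) :
    {x ∈ Ico (0 : ℝ) 1 | ∀ i < N + 1, digits x b i ∈ t i} =
      ⋃ d ∈ t 0, (fun x => b * x - (d.val : ℝ)) ⁻¹'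
        {y ∈ Ico (0 : ℝ) 1 | ∀ i < N, digits y b i ∈ t (i + 1)} := by
  ext x
  simp only [mem_ofPred_eq, mem_iUnion, mem_preimage, exists_prop]
  constructor
  · rintro ⟨hx, hdigits⟩
    have hmem := mul_sub_digits_zero_mem_Ico (b := b) hx
    refine ⟨digits x b 0, hdigits 0 (Nat.succ_pos N), hmem, fun i hi => ?_⟩
    rw [← (digits_of_mul_sub_mem_Ico hmem).2 i]
    exact hdigits (i + 1) (by omega)
  · rintro ⟨d, hd, hmem, hdigits⟩
    obtain ⟨h0, hsucc⟩ := digits_of_mul_sub_mem_Ico hmem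
    have hb : (0 : ℝ) < b := Nat.cast_pos.2 (NeZero.pos b)
    have hdb : ((d : ℕ) : ℝ) + 1 ≤ b := by exact_mod_cast d.isLt
    refine ⟨⟨by nlinarith [hmem.1], by nlinarith [hmem.2]⟩, fun i hi => ?_⟩
    cases i with
    | zero => rwa [h0]
    | succ i => rw [hsucc]; exact hdigits i (by omega)

lemma volume_preimage_mul_sub (c : ℝ) (s : Set ℝ) :
    volume ((fun x => b * x - c) ⁻¹' s) = (b : ℝ≥0∞)⁻¹ * volume s := by
  have hb : (b : ℝ) ≠ 0 := NeZero.ne _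
  have : (fun x => b * x - c) ⁻¹' s =
      (fun x => (b : ℝ) * x) ⁻¹' ((fun z => z + -c) ⁻¹' s) := by
    ext; simp [sub_eq_add_neg]
  rw [this, Real.volume_preimage_mul_left hb, measure_preimage_add_right, abs_inv,
    Nat.abs_cast, ENNReal.ofReal_inv_of_pos (by positivity), ENNReal.ofReal_natCast]

lemma measurableSet_setOf_digits_mem (N : ℕ) (t : ℕ → Set (Fin b)) :
    MeasurableSet {x ∈ Ico (0 : ℝ) 1 | ∀ i < N, digits x b i ∈ t i} :=
  measurableSet_Ico.inter <| measurable_digits <|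
    MeasurableSet.pi (s := {i | i < N}) (t := t) (to_countable _) fun _ _ => .of_discrete

lemma volume_setOf_digits_mem (N : ℕ) (t : ℕ → Set (Fin b)) :
    volume {x ∈ Ico (0 : ℝ) 1 | ∀ i < N, digits x b i ∈ t i} =
      ∏ i ∈ Finset.range N, (PMF.uniformOfFintype (Fin b)).toMeasure (t i) := by
  classical
  induction N generalizing t with
  | zero =>
    have : {x ∈ Ico (0 : ℝ) 1 | ∀ i < 0, digits x b i ∈ t i} = Ico 0 1 := by ext; simp
    rw [this]
    simp
  | succ N ih =>
    have hmeas (d : Fin b) : MeasurableSet ((fun x => b * x - (d.val : ℝ)) ⁻¹'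
        {y ∈ Ico (0 : ℝ) 1 | ∀ i < N, digits y b i ∈ t (i + 1)}) :=
      (measurable_id.const_mul _).sub_const _ (measurableSet_setOf_digits_mem _ _)
    rw [setOf_digits_mem_range_succ, measure_biUnion (to_countable _) ?_ fun d _ => hmeas d,
      Finset.prod_range_succ', ← ih]
    · simp_rw [volume_preimage_mul_sub, tsum_fintype, Finset.sum_const, Finset.card_univ,
        nsmul_eq_mul, PMF.toMeasure_uniformOfFintype_apply _ (.of_discrete), Fintype.card_fin,
        div_eq_mul_inv]
      ring
    · exact (pairwiseDisjoint_fiber (fun x => digits x b 0) _).mono fun d x hx =>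
        (digits_of_mul_sub_mem_Ico hx.1).1

variable (b) in
noncomputable abbrev uniformDigits : Measure (ℕ → Fin b) :=
  Measure.infinitePi fun _ => (PMF.uniformOfFintype (Fin b)).toMeasure

lemma measurePreserving_digits :
    MeasurePreserving (fun x => digits x b) (volume.restrict (Ico 0 1)) (uniformDigits b) where
  measurable := measurable_digits
  map_eq := by
    classical
    refine Measure.eq_infinitePi _ fun s t _ => ?_
    obtain ⟨N, hN⟩ := s.exists_nat_subset_range
    set t' : ℕ → Set (Fin b) := fun i => if i ∈ s then t i else univ
    have hpre : (fun x => digits x b) ⁻¹' Set.pi s t ∩ Ico 0 1 =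
        {x ∈ Ico (0 : ℝ) 1 | ∀ i < N, digits x b i ∈ t' i} := by
      ext x
      simp only [mem_inter_iff, mem_preimage, Set.mem_pi, mem_ofPred_eq, t']
      constructor
      · rintro ⟨h, hx⟩
        exact ⟨hx, fun i _ => by split_ifs with hi; exacts [h i hi, mem_univ _]⟩
      · rintro ⟨hx, h⟩
        refine ⟨fun i hi => ?_, hx⟩
        have := h i (Finset.mem_range.1 (hN hi))
        rwa [if_pos (Finset.mem_coe.1 hi)] at this
    rw [Measure.map_apply measurable_digits (.pi (to_countable _) fun _ _ => .of_discrete),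
      Measure.restrict_apply' measurableSet_Ico, hpre, volume_setOf_digits_mem,
      ← Finset.prod_subset hN fun i _ hi => by simp [t', hi]]
    exact Finset.prod_congr rfl fun i hi => by simp [t', hi]

lemma measurePreserving_ofDigits (hb : 1 < b) :
    MeasurePreserving ofDigits (uniformDigits b) (volume.restrict (Ico 0 1)) where
  measurable := continuous_ofDigits.measurable
  map_eq := by
    rw [← measurePreserving_digits.map_eq,
      Measure.map_map continuous_ofDigits.measurable measurable_digits]
    conv_rhs => rw [← Measure.map_id (μ := volume.restrict (Ico 0 1))]
    exact Measure.map_congr <|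
      ae_restrict_of_forall_mem measurableSet_Ico fun x hx => ofDigits_digits hb hx

end Real

lemma measurePreserving_comp_symm_infinitePi {ι X : Type*} [MeasurableSpace X] (μ : Measure X)
    [IsProbabilityMeasure μ] (e : ι ≃ ι) :
    MeasurePreserving (fun a : ι → X => a ∘ e.symm)
      (Measure.infinitePi fun _ => μ) (Measure.infinitePi fun _ => μ) := by
  have h : ⇑(MeasurableEquiv.piCongrLeft (fun _ => X) e) = fun a : ι → X => a ∘ e.symm := by
    ext a i
    simp [MeasurableEquiv.coe_piCongrLeft, Equiv.piCongrLeft_apply_eq_cast]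
  rw [← h]
  exact ⟨MeasurableEquiv.measurable _, Measure.infinitePi_map_piCongrLeft (fun _ => μ) e⟩

section digitPerm

variable {b : ℕ} [NeZero b]

lemma canonDigit_eq_digits {x : ℝ} (hx : 0 ≤ x) (k : ℕ) :
    canonDigit b x k = Real.digits x b k := by
  rw [canonDigit, ← Int.natCast_floor_eq_floor (by positivity), ← Int.natCast_mod,
    Int.toNat_natCast]
  rfl

lemma digitPerm_eq_ofDigits (φ : ℕ ≃ ℕ) {x : ℝ} (hx : 0 ≤ x) :
    digitPerm b φ x = Real.ofDigits fun k => Real.digits x b (φ.symm k) := by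
  simp only [digitPerm, baseVal, Real.ofDigits, Real.ofDigitsTerm, canonDigit_eq_digits hx,
    div_eq_mul_inv]

lemma frequently_digits_symm_ne (hb : 1 < b) (φ : ℕ ≃ ℕ) {x : ℝ} (hx : x ∈ Ico 0 1) :
    ∃ᶠ k in atTop, (Real.digits x b (φ.symm k) : ℕ) ≠ b - 1 :=
  φ.injective.nat_tendsto_atTop.frequently <| by
    simpa using Real.frequently_digits_ne hb hx

lemma digitPerm_mem_Ico (hb : 1 < b) (φ : ℕ ≃ ℕ) {x : ℝ} (hx : x ∈ Ico 0 1) :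
    digitPerm b φ x ∈ Ico 0 1 := by
  rw [digitPerm_eq_ofDigits φ hx.1]
  exact ⟨Real.ofDigits_nonneg _,
    Real.ofDigits_lt_one hb (frequently_digits_symm_ne hb φ hx).exists⟩

lemma digits_digitPerm (hb : 1 < b) (φ : ℕ ≃ ℕ) {x : ℝ} (hx : x ∈ Ico 0 1) :
    Real.digits (digitPerm b φ x) b = fun k => Real.digits x b (φ.symm k) := by
  rw [digitPerm_eq_ofDigits φ hx.1, Real.digits_ofDigits hb (frequently_digits_symm_ne hb φ hx)]

lemma digitPerm_symm_digitPerm (hb : 1 < b) (φ : ℕ ≃ ℕ) {x : ℝ} (hx : x ∈ Ico 0 1) :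
    digitPerm b φ.symm (digitPerm b φ x) = x := by
  rw [digitPerm_eq_ofDigits φ.symm (digitPerm_mem_Ico hb φ hx).1, digits_digitPerm hb φ hx]
  simpa using Real.ofDigits_digits hb hx

end digitPerm

/-- For every integer `b ≥ 2` and every bijection `φ : ℕ → ℕ`, the
digit-permutation map `T^b_φ` is a bijection of `[0,1)` onto itself and preserves Lebesgue
measure: the pushforward of `λ` restricted to `[0,1)` under `T^b_φ` equals `λ` restricted
to `[0,1)`. -/
theorem digitPerm_bijOn_and_measurePreserving (b : ℕ) (hb : 2 ≤ b) (φ : ℕ ≃ ℕ) :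
    Set.BijOn (digitPerm b φ) (Set.Ico (0 : ℝ) 1) (Set.Ico (0 : ℝ) 1) ∧
    Measure.map (digitPerm b φ) (volume.restrict (Set.Ico (0 : ℝ) 1))
      = volume.restrict (Set.Ico (0 : ℝ) 1) := by
  have : NeZero b := ⟨by omega⟩
  refine ⟨InvOn.bijOn ⟨fun x hx => digitPerm_symm_digitPerm hb φ hx,
    fun y hy => by simpa using digitPerm_symm_digitPerm hb φ.symm hy⟩
    (fun x hx => digitPerm_mem_Ico hb φ hx) (fun y hy => digitPerm_mem_Ico hb φ.symm hy), ?_⟩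
  have hT : digitPerm b φ =ᵐ[volume.restrict (Ico 0 1)]
      Real.ofDigits ∘ (fun a => a ∘ φ.symm) ∘ fun x => Real.digits x b :=
    ae_restrict_of_forall_mem measurableSet_Ico fun x hx => digitPerm_eq_ofDigits φ hx.1
  rw [Measure.map_congr hT]
  exact ((Real.measurePreserving_ofDigits hb).comp
    ((measurePreserving_comp_symm_infinitePi _ φ).comp Real.measurePreserving_digits)).map_eq
end

section
/- Let b ≥ 2 and k ≥ 1 be integers and ψ : ℕ × {0,…,k−1} → ℕ a bijection. Define M_ψ : [0,1)^k → [0,1) as follows: given (x_0,…,x_{k−1}) with canonical base-b expansions a_0,…,a_{k−1}, let c be the digit sequence determined by c(ψ(m,j)) = a_j(m) for all m ∈ ℕ and 0 ≤ j ≤ k−1, and let M_ψ(x_0,…,x_{k−1}) be the real represented by c. Then c is never eventually b−1 (so M_ψ is well defined with values in [0,1) and is injective), and M_ψ pushes the product of k copies of λ restricted to [0,1) forward to λ restricted to [0,1). -/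
/-!
The digit map `x ↦ canonDigit b x` carries Lebesgue measure on `[0,1)` to the product of uniform
measures on `{0, …, b-1}`: prescribing the first `n` digits cuts out a `b`-adic interval of
length `b⁻ⁿ`, and these cylinders determine a measure on sequences. Interleaving along `ψ` merely
reindexes a product of such product measures, and `baseVal` inverts the digit map on `[0,1)`, so
`M_ψ` carries the product of `k` copies of Lebesgue measure to Lebesgue measure.

Everything pointwise rests on `⌊x bⁿ⌋` being the integer whose base-`b` digits are the first `n`
digits of `x`: a digit sequence that is not eventually `b - 1` is therefore the canonical
expansion of its value, which makes `M_ψ` injective with values in `[0,1)`.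
-/

open MeasureTheory

/-- The digit sequence `c` obtained by interleaving, along the bijection
`ψ : ℕ × {0,…,k−1} ≃ ℕ`, the canonical base-`b` expansions of `x_0, …, x_{k-1}`:
it is determined by `c(ψ(m,j)) = a_j(m)`. -/
noncomputable def mergedDigits (b k : ℕ) (ψ : ℕ × Fin k ≃ ℕ) (x : Fin k → ℝ) : ℕ → ℕ :=
  fun n => canonDigit b (x (ψ.symm n).2) (ψ.symm n).1

/-- The merge map `M_ψ : [0,1)^k → [0,1)` sending `(x_0,…,x_{k−1})` to the real number
represented by the interleaved digit sequence `c`. -/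
noncomputable def mergeMap (b k : ℕ) (ψ : ℕ × Fin k ≃ ℕ) (x : Fin k → ℝ) : ℝ :=
  baseVal b (mergedDigits b k ψ x)

open Filter Set

def prefixValue (b : ℕ) (a : ℕ → ℕ) : ℕ → ℕ
  | 0 => 0
  | n + 1 => b * prefixValue b a n + a n

section prefixValue

variable {b : ℕ} {a d : ℕ → ℕ}

lemma prefixValue_congr {n : ℕ} (h : ∀ m < n, a m = d m) :
    prefixValue b a n = prefixValue b d n := by
  induction n with
  | zero => rfl
  | succ n ih => simp only [prefixValue, ih fun m hm => h m (by omega), h n (by omega)]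

lemma prefixValue_lt {n : ℕ} (ha : ∀ m < n, a m < b) : prefixValue b a n < b ^ n := by
  induction n with
  | zero => simp [prefixValue]
  | succ n ih =>
    have := ih fun m hm => ha m (by omega)
    have := ha n (by omega)
    calc b * prefixValue b a n + a n < b * (prefixValue b a n + 1) := by linarith
      _ ≤ b ^ (n + 1) := by rw [pow_succ']; gcongr; omega

lemma eq_of_prefixValue_eq {n : ℕ} (ha : ∀ m < n, a m < b) (hd : ∀ m < n, d m < b)
    (h : prefixValue b a n = prefixValue b d n) : ∀ m < n, a m = d m := by
  induction n with
  | zero => intro m hm; omega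
  | succ n ih =>
    have han := ha n (by omega)
    have hdn := hd n (by omega)
    simp only [prefixValue] at h
    have hlast : a n = d n := by
      have := congrArg (· % b) h
      simpa [Nat.mul_add_mod, Nat.mod_eq_of_lt han, Nat.mod_eq_of_lt hdn] using this
    have hinit : prefixValue b a n = prefixValue b d n := by
      have := congrArg (· / b) h
      simpa [Nat.mul_add_div (by omega : 0 < b), Nat.div_eq_of_lt han, Nat.div_eq_of_lt hdn]
        using this
    intro m hm
    rcases Nat.lt_succ_iff_lt_or_eq.mp hm with hm | rfl
    · exact ih (fun m hm => ha m (by omega)) (fun m hm => hd m (by omega)) hinit m hm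
    · exact hlast

lemma sum_range_div_pow_eq_prefixValue [NeZero b] (a : ℕ → ℕ) (n : ℕ) :
    ∑ m ∈ Finset.range n, (a m : ℝ) / (b : ℝ) ^ (m + 1) = prefixValue b a n / (b : ℝ) ^ n := by
  have : (b : ℝ) ≠ 0 := NeZero.ne _
  induction n with
  | zero => simp [prefixValue]
  | succ n ih =>
    rw [Finset.sum_range_succ, ih, prefixValue]
    push_cast
    field_simp
    ring

end prefixValue

section canonDigit

variable {b : ℕ} [NeZero b]

lemma canonDigit_lt (x : ℝ) (m : ℕ) : canonDigit b x m < b := by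
  have hb : (0 : ℤ) < b := by exact_mod_cast NeZero.pos b
  have := Int.emod_lt_of_pos ⌊x * (b : ℝ) ^ (m + 1)⌋ hb
  have := Int.emod_nonneg ⌊x * (b : ℝ) ^ (m + 1)⌋ hb.ne'
  unfold canonDigit
  omega

lemma floor_mul_pow_succ_eq_add_canonDigit (x : ℝ) (m : ℕ) :
    ⌊x * (b : ℝ) ^ (m + 1)⌋ = b * ⌊x * (b : ℝ) ^ m⌋ + canonDigit b x m := by
  have hdiv : ⌊x * (b : ℝ) ^ m⌋ = ⌊x * (b : ℝ) ^ (m + 1)⌋ / b := by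
    rw [← Int.floor_div_natCast, pow_succ, ← mul_assoc, mul_div_cancel_right₀ _ (NeZero.ne _)]
  have hmod : (canonDigit b x m : ℤ) = ⌊x * (b : ℝ) ^ (m + 1)⌋ % b :=
    Int.toNat_of_nonneg (Int.emod_nonneg _ (by exact_mod_cast NeZero.ne b))
  rw [hdiv, hmod, Int.mul_ediv_add_emod]

lemma floor_mul_pow_eq_prefixValue {x : ℝ} (hx : x ∈ Ico 0 1) (n : ℕ) :
    ⌊x * (b : ℝ) ^ n⌋ = prefixValue b (canonDigit b x) n := by
  induction n with
  | zero => simp [prefixValue, Int.floor_eq_zero_iff, hx.1, hx.2]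
  | succ n ih => rw [floor_mul_pow_succ_eq_add_canonDigit, ih, prefixValue]; push_cast; ring

lemma mem_Ico_div_pow_iff_floor_eq (n : ℕ) (t : ℤ) (x : ℝ) :
    x ∈ Ico (t / (b : ℝ) ^ n) ((t + 1) / (b : ℝ) ^ n) ↔ ⌊x * (b : ℝ) ^ n⌋ = t := by
  have : (0 : ℝ) < (b : ℝ) ^ n := by have := NeZero.pos b; positivity
  rw [mem_Ico, Int.floor_eq_iff, div_le_iff₀ this, lt_div_iff₀ this]

lemma setOf_canonDigit_prefix_eq_Ico {n : ℕ} {d : ℕ → ℕ} (hd : ∀ m < n, d m < b) :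
    {x | x ∈ Ico (0 : ℝ) 1 ∧ ∀ m < n, canonDigit b x m = d m} =
      Ico (prefixValue b d n / (b : ℝ) ^ n) ((prefixValue b d n + 1) / (b : ℝ) ^ n) := by
  ext x
  have hD := mem_Ico_div_pow_iff_floor_eq (b := b) n (prefixValue b d n) x
  push_cast at hD
  rw [hD]
  constructor
  · rintro ⟨hx, hdx⟩
    rw [floor_mul_pow_eq_prefixValue hx, prefixValue_congr hdx]
  · intro hfloor
    have hpos : (0 : ℝ) < (b : ℝ) ^ n := by have := NeZero.pos b; positivity
    have hlt : (prefixValue b d n : ℝ) + 1 ≤ (b : ℝ) ^ n := by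
      exact_mod_cast prefixValue_lt hd
    have hx : x ∈ Ico (0 : ℝ) 1 := by
      have h1 := Int.floor_le (x * (b : ℝ) ^ n)
      have h2 := Int.lt_floor_add_one (x * (b : ℝ) ^ n)
      rw [hfloor] at h1 h2
      push_cast at h1 h2
      constructor
      · nlinarith
      · nlinarith
    refine ⟨hx, eq_of_prefixValue_eq (fun m _ => canonDigit_lt x m) hd ?_⟩
    exact_mod_cast (floor_mul_pow_eq_prefixValue hx n).symm.trans hfloor

omit [NeZero b] in
@[fun_prop]
lemma measurable_canonDigit : Measurable (canonDigit b) :=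
  measurable_pi_lambda _ fun _ =>
    (Measurable.of_discrete (f := fun z : ℤ => (z % (b : ℤ)).toNat)).comp
      (Int.measurable_floor.comp (measurable_id.mul_const _))

end canonDigit

section baseVal

variable {b : ℕ} {a : ℕ → ℕ}

lemma baseVal_eq_ofDigits (ha : ∀ n, a n < b) :
    baseVal b a = Real.ofDigits fun n => (⟨a n, ha n⟩ : Fin b) := by
  simp only [baseVal, Real.ofDigits, Real.ofDigitsTerm, div_eq_mul_inv]

lemma baseVal_nonneg (a : ℕ → ℕ) : 0 ≤ baseVal b a :=
  tsum_nonneg fun _ => by positivity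

lemma baseVal_eq_prefixValue_add [NeZero b] (ha : ∀ n, a n < b) (n : ℕ) :
    baseVal b a = (prefixValue b a n + baseVal b (fun m => a (m + n))) / (b : ℝ) ^ n := by
  rw [baseVal_eq_ofDigits ha, baseVal_eq_ofDigits fun m => ha (m + n),
    Real.ofDigits_eq_sum_add_ofDigits _ n, add_div, ← sum_range_div_pow_eq_prefixValue,
    inv_mul_eq_div]
  simp only [Real.ofDigitsTerm, div_eq_mul_inv]

lemma baseVal_lt_one (hb : 1 < b) (ha : ∀ n, a n < b) {n : ℕ} (hn : a n ≠ b - 1) :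
    baseVal b a < 1 := by
  rw [baseVal_eq_ofDigits ha, ← Real.ofDigits_const_last_eq_one' hb]
  refine Summable.tsum_lt_tsum (i := n) (fun m => ?_) ?_ Real.summable_ofDigitsTerm
    Real.summable_ofDigitsTerm <;> unfold Real.ofDigitsTerm <;> gcongr <;> simp
  · exact Nat.le_sub_one_of_lt (ha m)
  · exact lt_of_le_of_ne (Nat.le_sub_one_of_lt (ha n)) hn

lemma baseVal_canonDigit (hb : 1 < b) {x : ℝ} (hx : x ∈ Ico 0 1) :
    baseVal b (canonDigit b x) = x := by
  have : NeZero b := ⟨by omega⟩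
  rw [baseVal_eq_ofDigits (canonDigit_lt x)]
  convert Real.ofDigits_digits hb hx using 3 with m
  ext
  change canonDigit b x m = _
  rw [Real.digits, Fin.val_ofNat, canonDigit,
    ← Int.natCast_floor_eq_floor (by have := hx.1; positivity), ← Int.natCast_mod,
    Int.toNat_natCast]

lemma measurable_baseVal : Measurable (baseVal b) :=
  Measurable.tsum fun _ => by fun_prop

end baseVal

def IsCanonicalExpansion (b : ℕ) (a : ℕ → ℕ) : Prop :=
  (∀ n, a n < b) ∧ ∃ᶠ n in atTop, a n ≠ b - 1

namespace IsCanonicalExpansion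

variable {b : ℕ} {a : ℕ → ℕ} (h : IsCanonicalExpansion b a) (hb : 1 < b)
include h hb

lemma baseVal_mem_Ico : baseVal b a ∈ Ico 0 1 :=
  let ⟨_, hn⟩ := h.2.exists
  ⟨baseVal_nonneg a, baseVal_lt_one hb h.1 hn⟩

lemma floor_baseVal_mul_pow (n : ℕ) : ⌊baseVal b a * (b : ℝ) ^ n⌋ = prefixValue b a n := by
  have : NeZero b := ⟨by omega⟩
  obtain ⟨m, hnm, hm⟩ := frequently_atTop.mp h.2 n
  have htail : baseVal b (fun i => a (i + n)) < 1 :=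
    baseVal_lt_one hb (fun i => h.1 _) (n := m - n) (by rwa [Nat.sub_add_cancel hnm])
  have := baseVal_nonneg (b := b) fun i => a (i + n)
  rw [baseVal_eq_prefixValue_add h.1 n, div_mul_cancel₀ _ (pow_ne_zero _ (NeZero.ne _)),
    Int.floor_eq_iff]
  push_cast
  constructor <;> linarith

lemma canonDigit_baseVal : canonDigit b (baseVal b a) = a := by
  have : NeZero b := ⟨by omega⟩
  funext m
  have := floor_mul_pow_succ_eq_add_canonDigit (b := b) (baseVal b a) m
  rw [h.floor_baseVal_mul_pow hb, h.floor_baseVal_mul_pow hb, prefixValue] at this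
  push_cast at this
  exact_mod_cast (by linarith : (canonDigit b (baseVal b a) m : ℤ) = a m)

end IsCanonicalExpansion

section canonical

variable {b : ℕ} (hb : 1 < b)
include hb

lemma isCanonicalExpansion_canonDigit {x : ℝ} (hx : x ∈ Ico 0 1) :
    IsCanonicalExpansion b (canonDigit b x) := by
  have : NeZero b := ⟨by omega⟩
  refine ⟨canonDigit_lt x, fun hlast => ?_⟩
  obtain ⟨N, hN⟩ := eventually_atTop.mp hlast
  -- a tail of digits `b - 1` would make `x` the right end point of its `N`-th `b`-adic interval
  have hx_eq := baseVal_eq_prefixValue_add (canonDigit_lt (b := b) x) N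
  have htail : (fun m => canonDigit b x (m + N)) = fun _ => b - 1 :=
    funext fun m => not_not.mp (hN (m + N) (by omega))
  rw [baseVal_canonDigit hb hx, htail, baseVal_eq_ofDigits fun _ => Nat.sub_one_lt_of_lt hb,
    Real.ofDigits_const_last_eq_one' hb, eq_div_iff (pow_ne_zero _ (NeZero.ne _))] at hx_eq
  have := floor_mul_pow_eq_prefixValue (b := b) hx N
  rw [hx_eq, ← Nat.cast_succ, Int.floor_natCast] at this
  omega

lemma canonDigit_injOn : InjOn (canonDigit b) (Ico 0 1) := fun x hx y hy hxy => by
  rw [← baseVal_canonDigit hb hx, hxy, baseVal_canonDigit hb hy]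

end canonical

noncomputable def digitMeasure (b : ℕ) : Measure ℕ :=
  ProbabilityTheory.uniformOn (Finset.range b : Set ℕ)

instance {b : ℕ} [NeZero b] : IsProbabilityMeasure (digitMeasure b) :=
  ProbabilityTheory.isProbabilityMeasure_uniformOn (Finset.finite_toSet _)
    ⟨0, by simp [NeZero.pos b]⟩

lemma digitMeasure_singleton (b d : ℕ) :
    digitMeasure b {d} = if d < b then (b : ENNReal)⁻¹ else 0 := by
  classical
  rw [digitMeasure, ← Finset.coe_singleton, ProbabilityTheory.uniformOn_apply_finset]
  split_ifs with hd <;> simp [Finset.inter_singleton_of_mem, hd, ENNReal.div_eq_inv_mul]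

section digitsDistribution

variable {b : ℕ} [NeZero b]

lemma volume_canonDigit_prefix (n : ℕ) (d : ℕ → ℕ) :
    volume {x | x ∈ Ico (0 : ℝ) 1 ∧ ∀ m < n, canonDigit b x m = d m} =
      ∏ m ∈ Finset.range n, digitMeasure b {d m} := by
  by_cases hd : ∀ m < n, d m < b
  · have hpos : (0 : ℝ) < (b : ℝ) ^ n := pow_pos (Nat.cast_pos.mpr (NeZero.pos b)) n
    rw [setOf_canonDigit_prefix_eq_Ico hd, Real.volume_Ico, add_div, add_sub_cancel_left,
      one_div, ENNReal.ofReal_inv_of_pos hpos, ENNReal.ofReal_pow (Nat.cast_nonneg _),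
      ENNReal.ofReal_natCast, Finset.prod_congr rfl fun m hm => by
        rw [digitMeasure_singleton, if_pos (hd m (Finset.mem_range.mp hm))],
      Finset.prod_const, Finset.card_range, ENNReal.inv_pow]
  · push Not at hd
    obtain ⟨m, hm, hdm⟩ := hd
    rw [Finset.prod_eq_zero (Finset.mem_range.mpr hm)
      (by rw [digitMeasure_singleton, if_neg (not_lt.mpr hdm)])]
    convert measure_empty (μ := (volume : Measure ℝ))
    refine eq_empty_of_forall_notMem fun x ⟨_, hx⟩ => ?_
    have := canonDigit_lt (b := b) x m
    have := hx m hm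
    omega

lemma map_restrict_range_map_canonDigit (N : ℕ) :
    ((volume.restrict (Ico (0 : ℝ) 1)).map (canonDigit b)).map (Finset.range N).restrict =
      Measure.pi fun _ => digitMeasure b := by
  refine Measure.ext_of_singleton fun e => ?_
  set d : ℕ → ℕ := fun m => if h : m < N then e ⟨m, Finset.mem_range.mpr h⟩ else 0
  have hpre : canonDigit b ⁻¹' ((Finset.range N).restrict ⁻¹' {e}) ∩ Ico 0 1 =
      {x | x ∈ Ico (0 : ℝ) 1 ∧ ∀ m < N, canonDigit b x m = d m} := by
    ext x
    simp only [mem_inter_iff, mem_preimage, mem_singleton_iff, funext_iff, Finset.restrict,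
      Subtype.forall, Finset.mem_range, mem_ofPred_eq, d]
    exact and_comm.trans (and_congr_right' (forall₂_congr fun m hm => by rw [dif_pos hm]))
  have hS : MeasurableSet ((Finset.range N).restrict ⁻¹' {e} : Set (ℕ → ℕ)) :=
    Finset.measurable_restrict _ (measurableSet_singleton e)
  rw [Measure.map_apply (Finset.measurable_restrict _) (measurableSet_singleton e),
    Measure.map_apply measurable_canonDigit hS, Measure.restrict_apply (measurable_canonDigit hS),
    hpre, volume_canonDigit_prefix, ← Set.univ_pi_singleton, Measure.pi_pi,
    ← Finset.prod_coe_sort]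
  exact Finset.prod_congr rfl fun i _ => by simp only [d, dif_pos (Finset.mem_range.mp i.2)]

theorem map_canonDigit_volume :
    (volume.restrict (Ico (0 : ℝ) 1)).map (canonDigit b) =
      Measure.infinitePi fun _ => digitMeasure b := by
  refine IsProjectiveLimit.unique (fun I => ?_) (Measure.isProjectiveLimit_infinitePi _)
  obtain ⟨N, hN⟩ := Finset.exists_nat_subset_range I
  have hproj := isProjectiveMeasureFamily_pi (fun _ => digitMeasure b) _ I hN
  dsimp only at hproj
  rw [hproj, ← map_restrict_range_map_canonDigit N,
    Measure.map_map (Finset.measurable_restrict₂ hN) (Finset.measurable_restrict _),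
    Finset.restrict₂_comp_restrict]

theorem map_baseVal_infinitePi (hb : 1 < b) :
    (Measure.infinitePi fun _ => digitMeasure b).map (baseVal b) = volume.restrict (Ico 0 1) := by
  rw [← map_canonDigit_volume, Measure.map_map measurable_baseVal measurable_canonDigit]
  conv_rhs => rw [← Measure.map_id (μ := volume.restrict (Ico (0 : ℝ) 1))]
  exact Measure.map_congr <|
    (ae_restrict_mem measurableSet_Ico).mono fun x hx => baseVal_canonDigit hb hx

end digitsDistribution

lemma map_pi_infinitePi_reindex {ι κ ι' X : Type*} [Fintype κ] [MeasurableSpace X]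
    (μ : Measure X) [IsProbabilityMeasure μ] (e : ι × κ ≃ ι') :
    (Measure.pi fun _ : κ => Measure.infinitePi fun _ : ι => μ).map
        (fun y i => y (e.symm i).2 (e.symm i).1) =
      Measure.infinitePi fun _ : ι' => μ := by
  have : (fun (y : κ → ι → X) i => y (e.symm i).2 (e.symm i).1) =
      MeasurableEquiv.piCongrLeft (fun _ => X) ((Equiv.prodComm κ ι).trans e) ∘
        (MeasurableEquiv.curry κ ι X).symm := by
    funext y i
    simp [MeasurableEquiv.piCongrLeft, Equiv.piCongrLeft_apply_eq_cast, Function.uncurry]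
  rw [this, ← Measure.map_map (by fun_prop) (by fun_prop), ← Measure.infinitePi_eq_pi,
    Measure.infinitePi_map_curry_symm]
  exact Measure.infinitePi_map_piCongrLeft (fun _ => μ) _

section mergeMap

variable {b k : ℕ} (ψ : ℕ × Fin k ≃ ℕ)

lemma mergedDigits_apply_equiv (x : Fin k → ℝ) (m : ℕ) (j : Fin k) :
    mergedDigits b k ψ x (ψ (m, j)) = canonDigit b (x j) m := by
  simp [mergedDigits]

lemma measurable_mergedDigits : Measurable (mergedDigits b k ψ) := by
  unfold mergedDigits
  fun_prop

lemma map_mergedDigits [NeZero b] :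
    (Measure.pi fun _ : Fin k => volume.restrict (Ico (0 : ℝ) 1)).map (mergedDigits b k ψ) =
      Measure.infinitePi fun _ => digitMeasure b := by
  have : mergedDigits b k ψ = (fun y n => y (ψ.symm n).2 (ψ.symm n).1) ∘
      fun (x : Fin k → ℝ) j => canonDigit b (x j) := rfl
  rw [this, ← Measure.map_map (by fun_prop) (by fun_prop),
    Measure.pi_map_pi fun _ => measurable_canonDigit.aemeasurable, map_canonDigit_volume,
    map_pi_infinitePi_reindex]

variable {ψ} (hb : 1 < b)
include hb

lemma isCanonicalExpansion_mergedDigits {x : Fin k → ℝ} (hx : x ∈ univ.pi fun _ => Ico 0 1) :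
    IsCanonicalExpansion b (mergedDigits b k ψ x) := by
  have : NeZero b := ⟨by omega⟩
  refine ⟨fun n => canonDigit_lt _ _, ?_⟩
  -- one coordinate suffices: its digits sit at the positions `ψ (m, j)`, which tend to infinity
  let j := (ψ.symm 0).2
  have hψ : Tendsto (fun m => ψ (m, j)) atTop atTop :=
    Function.Injective.nat_tendsto_atTop fun m m' h => by simpa using ψ.injective h
  refine hψ.frequently ?_
  simpa only [mergedDigits_apply_equiv] using
    (isCanonicalExpansion_canonDigit hb (hx j (mem_univ j))).2

lemma mergeMap_injOn : InjOn (mergeMap b k ψ) (univ.pi fun _ => Ico 0 1) := by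
  intro x hx y hy hxy
  have hdigits : mergedDigits b k ψ x = mergedDigits b k ψ y := by
    rw [← (isCanonicalExpansion_mergedDigits hb hx).canonDigit_baseVal hb,
      ← (isCanonicalExpansion_mergedDigits hb hy).canonDigit_baseVal hb]
    exact congrArg (canonDigit b) hxy
  funext j
  refine canonDigit_injOn hb (hx j (mem_univ j)) (hy j (mem_univ j)) (funext fun m => ?_)
  simpa only [mergedDigits_apply_equiv] using congrFun hdigits (ψ (m, j))

end mergeMap

theorem mergeMap_measurePreserving_general (b k : ℕ) (hb : 2 ≤ b)
    (ψ : ℕ × Fin k ≃ ℕ) :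
    (∀ x ∈ Set.univ.pi (fun _ : Fin k => Set.Ico (0 : ℝ) 1),
      ∀ N : ℕ, ∃ n, N ≤ n ∧ mergedDigits b k ψ x n ≠ b - 1) ∧
    Set.MapsTo (mergeMap b k ψ)
      (Set.univ.pi (fun _ : Fin k => Set.Ico (0 : ℝ) 1)) (Set.Ico (0 : ℝ) 1) ∧
    Set.InjOn (mergeMap b k ψ) (Set.univ.pi (fun _ : Fin k => Set.Ico (0 : ℝ) 1)) ∧
    Measure.map (mergeMap b k ψ)
        (Measure.pi fun _ : Fin k => volume.restrict (Set.Ico (0 : ℝ) 1))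
      = volume.restrict (Set.Ico (0 : ℝ) 1) := by
  have : NeZero b := ⟨by omega⟩
  refine ⟨fun x hx => frequently_atTop.mp (isCanonicalExpansion_mergedDigits hb hx).2,
    fun x hx => (isCanonicalExpansion_mergedDigits hb hx).baseVal_mem_Ico hb,
    mergeMap_injOn hb, ?_⟩
  calc (Measure.pi fun _ => volume.restrict (Ico (0 : ℝ) 1)).map (mergeMap b k ψ)
      = ((Measure.pi fun _ => volume.restrict (Ico (0 : ℝ) 1)).map
          (mergedDigits b k ψ)).map (baseVal b) :=
        (Measure.map_map measurable_baseVal (measurable_mergedDigits ψ)).symm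
    _ = volume.restrict (Ico 0 1) := by
        rw [map_mergedDigits, map_baseVal_infinitePi hb]

/-- Let `b ≥ 2` and `k ≥ 1` be integers and `ψ : ℕ × {0,…,k−1} → ℕ` a
bijection. Then for every `(x_0,…,x_{k−1}) ∈ [0,1)^k` the interleaved digit sequence `c` is
never eventually `b − 1` (so `M_ψ` is well defined with values in `[0,1)` and is injective),
and `M_ψ` pushes the product of `k` copies of `λ` restricted to `[0,1)` forward to `λ`
restricted to `[0,1)`. -/
theorem mergeMap_measurePreserving (b k : ℕ) (hb : 2 ≤ b) (hk : 1 ≤ k)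
    (ψ : ℕ × Fin k ≃ ℕ) :
    (∀ x ∈ Set.univ.pi (fun _ : Fin k => Set.Ico (0 : ℝ) 1),
      ∀ N : ℕ, ∃ n, N ≤ n ∧ mergedDigits b k ψ x n ≠ b - 1) ∧
    Set.MapsTo (mergeMap b k ψ)
      (Set.univ.pi (fun _ : Fin k => Set.Ico (0 : ℝ) 1)) (Set.Ico (0 : ℝ) 1) ∧
    Set.InjOn (mergeMap b k ψ) (Set.univ.pi (fun _ : Fin k => Set.Ico (0 : ℝ) 1)) ∧
    Measure.map (mergeMap b k ψ)
        (Measure.pi fun _ : Fin k => volume.restrict (Set.Ico (0 : ℝ) 1))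
      = volume.restrict (Set.Ico (0 : ℝ) 1) :=
  mergeMap_measurePreserving_general b k hb ψ
end
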